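/- arXiv:2212.10542 — 3 statements merged into one kernel-verified Lean document; each statement's English description precedes it below -/
import Mathlib

section
/- For fixed positive integers j ≥ k ≥ 2 and i ≥ 2, F^(k)(n; j, i) ≥ C(n,k) / r(K_n^(k), K_j^(k), C(j,k) - i + 2), where F^(k)(n; j, i) is the minimum m such that every k-uniform hypergraph on n vertices with m edges contains j vertices spanning at least i edges, and r(G, F, q) is the minimum number of colors in an edge-coloring of G in which every copy of F receives at least q colors. -/
/-- The Brown–Erdős–Sós function `F^(k)(n; j, i)`: the minimum number `m` of edges such
that every `k`-uniform hypergraph on `n` vertices with `m` edges contains a set of `j`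
vertices spanning at least `i` edges. -/
noncomputable def besF (k n j i : ℕ) : ℕ :=
  sInf {m | ∀ H : Finset (Finset (Fin n)), (∀ e ∈ H, e.card = k) → H.card = m →
    ∃ S : Finset (Fin n), S.card = j ∧ i ≤ (H.filter (fun e => e ⊆ S)).card}

/-- The generalized Ramsey number `r(K_n^(k), K_j^(k), q)`: the minimum number `t` of
colors in an edge-coloring of the complete `k`-uniform hypergraph on `n` vertices such
that every set of `j` vertices spans edges of at least `q` colors. -/
noncomputable def genRamsey (n k j q : ℕ) : ℕ :=
  sInf {t | ∃ φ : Finset (Fin n) → Fin t,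
    ∀ S : Finset (Fin n), S.card = j → q ≤ ((S.powersetCard k).image φ).card}

lemma image_card_le_aux {α β : Type*} [DecidableEq α] [DecidableEq β] (A B : Finset α)
    (f : α → β) (c : β) (hBA : B ⊆ A) (hc : ∀ b ∈ B, f b = c) :
    (A.image f).card ≤ A.card - B.card + 1 := by
  have hsub : A.image f ⊆ (A \ B).image f ∪ {c} := by
    intro y hy
    simp only [Finset.mem_image] at hy
    obtain ⟨a, ha, rfl⟩ := hy
    by_cases hb : a ∈ B
    · simp [hc a hb]
    · exact Finset.mem_union_left _ (Finset.mem_image_of_mem _ (Finset.mem_sdiff.2 ⟨ha, hb⟩))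
  calc (A.image f).card ≤ ((A \ B).image f ∪ {c}).card := Finset.card_le_card hsub
    _ ≤ ((A \ B).image f).card + ({c} : Finset β).card := Finset.card_union_le _ _
    _ ≤ (A \ B).card + 1 := by
        have := Finset.card_image_le (s := A \ B) (f := f)
        simp only [Finset.card_singleton]
        omega
    _ = A.card - B.card + 1 := by rw [Finset.card_sdiff_of_subset hBA]

/-- `F^(k)(n; j, i) ≥ C(n,k) / r(K_n^(k), K_j^(k), C(j,k) - i + 2)`. -/
theorem stmt5 (k j i : ℕ) (hk : 2 ≤ k) (hjk : k ≤ j) (hi : 2 ≤ i) (n : ℕ) :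
    ((n.choose k : ℝ)) / (genRamsey n k j (j.choose k - i + 2) : ℝ) ≤ (besF k n j i : ℝ) := by
  set q := j.choose k - i + 2 with hq
  set t := genRamsey n k j q with ht
  set m := besF k n j i with hm
  rcases Nat.eq_zero_or_pos t with h0 | hpos
  · rw [h0]
    simp only [Nat.cast_zero, div_zero]
    positivity
  · -- besF set is nonempty
    have hmmem : ∀ H : Finset (Finset (Fin n)), (∀ e ∈ H, e.card = k) → H.card = m →
        ∃ S : Finset (Fin n), S.card = j ∧ i ≤ (H.filter (fun e => e ⊆ S)).card := by
      have : (n.choose k + 1) ∈ {m | ∀ H : Finset (Finset (Fin n)),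
          (∀ e ∈ H, e.card = k) → H.card = m →
          ∃ S : Finset (Fin n), S.card = j ∧ i ≤ (H.filter (fun e => e ⊆ S)).card} := by
        intro H hcard hHcard
        exfalso
        have hHsub : H ⊆ (Finset.univ : Finset (Fin n)).powersetCard k := by
          intro e he
          rw [Finset.mem_powersetCard]
          exact ⟨Finset.subset_univ _, hcard e he⟩
        have := Finset.card_le_card hHsub
        rw [Finset.card_powersetCard, Finset.card_univ, Fintype.card_fin] at this
        omega
      have := Nat.sInf_mem ⟨_, this⟩
      exact this
    obtain ⟨φ, hφ⟩ : ∃ φ : Finset (Fin n) → Fin t,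
        ∀ S : Finset (Fin n), S.card = j → q ≤ ((S.powersetCard k).image φ).card := by
      have hne : {t | ∃ φ : Finset (Fin n) → Fin t,
          ∀ S : Finset (Fin n), S.card = j → q ≤ ((S.powersetCard k).image φ).card}.Nonempty := by
        by_contra hc
        rw [Set.not_nonempty_iff_eq_empty] at hc
        rw [ht, genRamsey, hc, Nat.sInf_empty] at hpos
        exact absurd hpos (lt_irrefl 0)
      exact Nat.sInf_mem hne
    -- each color class has fewer than m edges
    have hclass : ∀ c : Fin t,
        (((Finset.univ : Finset (Fin n)).powersetCard k).filter (fun e => φ e = c)).card ≤ m := by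
      intro c
      by_contra hcon
      push_neg at hcon
      obtain ⟨H', hH'sub, hH'card⟩ := Finset.exists_subset_card_eq (le_of_lt hcon)
      have hH'k : ∀ e ∈ H', e.card = k := by
        intro e he
        have := hH'sub he
        rw [Finset.mem_filter, Finset.mem_powersetCard] at this
        exact this.1.2
      obtain ⟨S, hScard, hSi⟩ := hmmem H' hH'k hH'card
      -- B := edges of H' inside S; A := k-subsets of S
      set B := H'.filter (fun e => e ⊆ S) with hB
      have hBA : B ⊆ S.powersetCard k := by
        intro e he
        rw [hB, Finset.mem_filter] at he
        rw [Finset.mem_powersetCard]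
        exact ⟨he.2, hH'k e he.1⟩
      have hBc : ∀ e ∈ B, φ e = c := by
        intro e he
        rw [hB, Finset.mem_filter] at he
        have := hH'sub he.1
        rw [Finset.mem_filter] at this
        exact this.2
      have hile : i ≤ j.choose k := by
        have := Finset.card_le_card hBA
        rw [Finset.card_powersetCard, hScard] at this
        omega
      have himg := image_card_le_aux (S.powersetCard k) B φ c hBA hBc
      rw [Finset.card_powersetCard, hScard] at himg
      have hlb := hφ S hScard
      omega
    -- sum over colors
    have hsum : n.choose k ≤ t * m := by
      have hpart := Finset.card_eq_sum_card_fiberwise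
        (s := (Finset.univ : Finset (Fin n)).powersetCard k) (t := (Finset.univ : Finset (Fin t)))
        (f := φ) (fun x _ => Finset.mem_univ _)
      rw [Finset.card_powersetCard, Finset.card_univ, Fintype.card_fin] at hpart
      calc n.choose k = ∑ c : Fin t,
            (((Finset.univ : Finset (Fin n)).powersetCard k).filter (fun e => φ e = c)).card :=
            hpart
        _ ≤ ∑ _c : Fin t, m := Finset.sum_le_sum (fun c _ => hclass c)
        _ = t * m := by simp [Finset.sum_const, Finset.card_univ, mul_comm]
    rw [div_le_iff₀ (by exact_mod_cast hpos)]
    have : (n.choose k : ℝ) ≤ (m : ℝ) * (t : ℝ) := by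
      have : (n.choose k : ℝ) ≤ (t * m : ℕ) := by exact_mod_cast hsum
      push_cast at this
      linarith
    exact this
end

section
/- Let r, q be positive integers with q ≤ r, and let t be a positive integer. The probability that r independent uniformly random colors, each chosen from its own list of size t, together use at most q-1 distinct colors is at most C(r·t, q-1)·((q-1)/t)^r. -/
/-- If each of `r` edges independently receives a uniformly random color
from its own list of exactly `t` colors, the probability that at most `q - 1` distinct
colors are used is at most `C(r·t, q-1)·((q-1)/t)^r`. (The probability is expressed as
the number of favourable outcomes divided by the total number `t^r` of outcomes.) -/
theorem stmt8 {γ : Type*} [DecidableEq γ] (r q t : ℕ) (hq : 1 ≤ q) (hqr : q ≤ r)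
    (ht : 1 ≤ t) (L : Fin r → Finset γ) (hL : ∀ i, (L i).card = t) :
    (((Fintype.piFinset L).filter
        (fun c : Fin r → γ => ((Finset.univ.image c : Finset γ)).card ≤ q - 1)).card : ℝ)
        / (t : ℝ) ^ r ≤
      ((r * t).choose (q - 1) : ℝ) * (((q : ℝ) - 1) / (t : ℝ)) ^ r := by
  have hr : 1 ≤ r := hq.trans hqr
  set F := (Fintype.piFinset L).filter
      (fun c : Fin r → γ => ((Finset.univ.image c : Finset γ)).card ≤ q - 1) with hF
  have hpi : (Fintype.piFinset L).card = t ^ r := by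
    rw [Fintype.card_piFinset]
    simp [hL]
  have hchoosepos : 0 < (r * t).choose (q - 1) := by
    apply Nat.choose_pos
    calc q - 1 ≤ r := by omega
      _ ≤ r * t := Nat.le_mul_of_pos_right r ht
  have key : F.card ≤ (r * t).choose (q - 1) * (q - 1) ^ r := by
    by_cases hcase : q - 1 ≤ t
    · -- embed into union over (q-1)-subsets of the union of lists
      set U := Finset.univ.biUnion L with hU
      have hUcard : q - 1 ≤ U.card := by
        refine le_trans ?_ (Finset.card_le_card
          (Finset.subset_biUnion_of_mem L (Finset.mem_univ (⟨0, hr⟩ : Fin r))))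
        rw [hL]; exact hcase
      have hsub : F ⊆ (U.powersetCard (q - 1)).biUnion
          (fun S => Fintype.piFinset (fun i => L i ∩ S)) := by
        intro c hc
        rw [hF, Finset.mem_filter] at hc
        obtain ⟨hc1, hc2⟩ := hc
        have himg : (Finset.univ.image c : Finset γ) ⊆ U := by
          intro x hx
          obtain ⟨i, _, rfl⟩ := Finset.mem_image.mp hx
          exact Finset.mem_biUnion.mpr ⟨i, Finset.mem_univ i,
            (Fintype.mem_piFinset.mp hc1) i⟩
        obtain ⟨S, hS1, hS2, hS3⟩ := Finset.exists_subsuperset_card_eq himg hc2 hUcard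
        refine Finset.mem_biUnion.mpr ⟨S, ?_, ?_⟩
        · exact Finset.mem_powersetCard.mpr ⟨hS2, hS3⟩
        · rw [Fintype.mem_piFinset]
          intro i
          exact Finset.mem_inter.mpr ⟨(Fintype.mem_piFinset.mp hc1) i,
            hS1 (Finset.mem_image_of_mem c (Finset.mem_univ i))⟩
      calc F.card ≤ ((U.powersetCard (q - 1)).biUnion
            (fun S => Fintype.piFinset (fun i => L i ∩ S))).card :=
            Finset.card_le_card hsub
        _ ≤ ∑ S ∈ U.powersetCard (q - 1), (Fintype.piFinset (fun i => L i ∩ S)).card :=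
            Finset.card_biUnion_le
        _ ≤ ∑ _S ∈ U.powersetCard (q - 1), (q - 1) ^ r := by
            apply Finset.sum_le_sum
            intro S hS
            rw [Fintype.card_piFinset]
            calc ∏ i, (L i ∩ S).card ≤ ∏ _i : Fin r, (q - 1) := by
                  apply Finset.prod_le_prod'
                  intro i _
                  calc (L i ∩ S).card ≤ S.card :=
                        Finset.card_le_card (Finset.inter_subset_right)
                    _ = q - 1 := (Finset.mem_powersetCard.mp hS).2
              _ = (q - 1) ^ r := by simp
        _ = (U.powersetCard (q - 1)).card * (q - 1) ^ r := by
            rw [Finset.sum_const, smul_eq_mul]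
        _ ≤ (r * t).choose (q - 1) * (q - 1) ^ r := by
            apply Nat.mul_le_mul_right
            rw [Finset.card_powersetCard]
            apply Nat.choose_le_choose
            calc U.card ≤ ∑ i, (L i).card := Finset.card_biUnion_le
              _ = r * t := by simp [hL, Finset.sum_const, mul_comm]
    · push_neg at hcase
      calc F.card ≤ (Fintype.piFinset L).card := Finset.card_filter_le _ _
        _ = t ^ r := hpi
        _ ≤ (q - 1) ^ r := Nat.pow_le_pow_left hcase.le r
        _ ≤ (r * t).choose (q - 1) * (q - 1) ^ r :=
            Nat.le_mul_of_pos_left _ hchoosepos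
  have htpos : (0 : ℝ) < (t : ℝ) ^ r := by positivity
  calc (F.card : ℝ) / (t : ℝ) ^ r
      ≤ (((r * t).choose (q - 1) * (q - 1) ^ r : ℕ) : ℝ) / (t : ℝ) ^ r := by
        gcongr ?_ / _
        exact_mod_cast key
    _ = ((r * t).choose (q - 1) : ℝ) * (((q : ℝ) - 1) / (t : ℝ)) ^ r := by
        rw [div_pow]
        push_cast [Nat.cast_sub hq]
        ring
end

section
/- Let F be a fixed k-uniform hypergraph with |V(F)| > k and let q ≤ |E(F)| be a positive integer. There exists a constant C = C(F, q, k) such that for every k-uniform hypergraph G on n vertices, the generalized list Ramsey number satisfies r_ℓ(G, F, q) ≤ C · n^{(|V(F)|-k)/(|E(F)|-q+1)}. -/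
/-
Colour every edge of `G` independently and uniformly from its list of `t` colours. A copy of `F`
gets at most `q - 1` colours only if some `q - 1` of its edges carry all of its colours and each of
the other `s = |E(F)| - q + 1` edges repeats one of them; this has probability at most
`2^|E(F)| (q-1)^s / t^s`. The event depends only on the colours of the copy's edges, and a copy
shares an edge with at most `|E(F)| |V(F)|^k n^(|V(F)|-k)` copies, since sharing an edge pins
`k` of its vertices inside the `|V(F)|` vertices of the first copy. The symmetric Lovász Local
Lemma, in its counting form on the product of the lists, yields a good colouring as soon as
`t^s` is a large constant times `n^(|V(F)|-k)`, i.e. for `t = C n^((|V(F)|-k)/s)`.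
-/

/-- `ι : Fin f ↪ Fin n` is a copy of the `k`-uniform hypergraph `F` (with vertex set
`Fin f` and edge set `Fe`) in the `k`-uniform hypergraph `G` if it maps edges of `F`
to edges of `G`. -/
def IsCopy {f n : ℕ} (Fe : Finset (Finset (Fin f))) (G : Finset (Finset (Fin n)))
    (ι : Fin f ↪ Fin n) : Prop :=
  ∀ e ∈ Fe, e.map ι ∈ G

/-- `φ` is an `(F,q)`-coloring of `G`: every copy of `F` in `G` receives at least `q`
colors. -/
def IsFQColoring {f n : ℕ} (Fe : Finset (Finset (Fin f))) (G : Finset (Finset (Fin n)))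
    (q : ℕ) (φ : Finset (Fin n) → ℕ) : Prop :=
  ∀ ι : Fin f ↪ Fin n, IsCopy Fe G ι →
    q ≤ ((Fe.image (fun e => e.map ι)).image φ).card

/-- The generalized list Ramsey number `r_ℓ(G, F, q)`: the minimum `t` such that for
every assignment of lists of at least `t` colors to the edges of `G`, there is a
coloring from the lists in which every copy of `F` receives at least `q` colors. -/
noncomputable def listRamseyF {f : ℕ} (Fe : Finset (Finset (Fin f))) (q n : ℕ)
    (G : Finset (Finset (Fin n))) : ℕ :=
  sInf {t | ∀ L : Finset (Fin n) → Finset ℕ, (∀ e ∈ G, t ≤ (L e).card) →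
    ∃ φ : Finset (Fin n) → ℕ, (∀ e ∈ G, φ e ∈ L e) ∧ IsFQColoring Fe G q φ}

open Finset Fintype

section ProductSpace

variable {ι α : Type*} [Fintype ι] [DecidableEq ι]

theorem piecewise_mem_piFinset {L : ι → Finset α} (T : Finset ι) {x y : ι → α}
    (hx : x ∈ piFinset L) (hy : y ∈ piFinset L) : T.piecewise x y ∈ piFinset L := by
  rw [mem_piFinset] at *
  intro i
  by_cases hi : i ∈ T <;> simp [hi, hx i, hy i]

theorem card_filter_and_mul_card_piFinset (L : ι → Finset α) (T : Finset ι)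
    {A B : (ι → α) → Prop} [DecidablePred A] [DecidablePred B]
    (hA : DependsOn A T) (hB : DependsOn B (↑T)ᶜ) :
    #{ω ∈ piFinset L | A ω ∧ B ω} * #(piFinset L) =
      #{ω ∈ piFinset L | A ω} * #{ω ∈ piFinset L | B ω} := by
  rw [← card_product, ← card_product]
  let swap (x : (ι → α) × (ι → α)) := (T.piecewise x.1 x.2, T.piecewise x.2 x.1)
  have hswap : ∀ x, swap (swap x) = x := fun x ↦ by
    ext i <;> by_cases hi : i ∈ T <;> simp [swap, hi]
  have hAswap : ∀ x y : ι → α, A (T.piecewise x y) = A x :=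
    fun x y ↦ hA fun i hi ↦ by simp [mem_coe.1 hi]
  have hBswap : ∀ x y : ι → α, B (T.piecewise x y) = B y :=
    fun x y ↦ hB fun i hi ↦ by simp [show i ∉ T from hi]
  refine card_bij' (fun x _ ↦ swap x) (fun x _ ↦ swap x) ?_ ?_ (fun x _ ↦ hswap x)
    (fun x _ ↦ hswap x)
  · rintro ⟨x, y⟩ h
    simp only [mem_product, mem_filter] at h ⊢
    exact ⟨⟨piecewise_mem_piFinset T h.1.1 h.2, by rw [hAswap]; exact h.1.2.1⟩,
      piecewise_mem_piFinset T h.2 h.1.1, by rw [hBswap]; exact h.1.2.2⟩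
  · rintro ⟨x, y⟩ h
    simp only [mem_product, mem_filter] at h ⊢
    exact ⟨⟨piecewise_mem_piFinset T h.1.1 h.2.1, by rw [hAswap]; exact h.1.2,
      by rw [hBswap]; exact h.2.2⟩, piecewise_mem_piFinset T h.2.1 h.1.1⟩

end ProductSpace

section LocalLemma

variable {ι α J : Type*} [Fintype ι] [DecidableEq ι]
  (L : ι → Finset α) (P : J → (ι → α) → Prop) [∀ j, DecidablePred (P j)]

def avoiding (S : Finset J) : Finset (ι → α) := {ω ∈ piFinset L | ∀ j ∈ S, ¬ P j ω}

variable {L P}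

theorem avoiding_anti {S S' : Finset J} (h : S' ⊆ S) : avoiding L P S ⊆ avoiding L P S' :=
  fun _ hω ↦ mem_filter.2 ⟨(mem_filter.1 hω).1, fun j hj ↦ (mem_filter.1 hω).2 j (h hj)⟩

theorem avoiding_insert [DecidableEq J] (j : J) (S : Finset J) :
    avoiding L P (insert j S) = {ω ∈ avoiding L P S | ¬ P j ω} := by
  simp only [avoiding, filter_filter, forall_mem_insert]
  exact filter_congr fun _ _ ↦ and_comm

theorem card_avoiding_le_add_sum [DecidableEq J] (S S' : Finset J) :
    #(avoiding L P S') ≤ #(avoiding L P S) + ∑ j ∈ S \ S', #{ω ∈ avoiding L P S' | P j ω} := by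
  classical
  calc #(avoiding L P S')
      ≤ #(avoiding L P S ∪ (S \ S').biUnion fun j ↦ {ω ∈ avoiding L P S' | P j ω}) := by
        refine card_le_card fun ω hω ↦ ?_
        by_cases hS : ∀ j ∈ S, ¬ P j ω
        · exact mem_union_left _ (mem_filter.2 ⟨(mem_filter.1 hω).1, hS⟩)
        · push Not at hS
          obtain ⟨j, hjS, hj⟩ := hS
          have hjS' : j ∉ S' := fun hj' ↦ (mem_filter.1 hω).2 j hj' hj
          exact mem_union_right _
            (mem_biUnion.2 ⟨j, mem_sdiff.2 ⟨hjS, hjS'⟩, mem_filter.2 ⟨hω, hj⟩⟩)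
    _ ≤ _ := (card_union_le _ _).trans (Nat.add_le_add_left card_biUnion_le _)

theorem card_filter_avoiding_mul_card (supp : J → Finset ι)
    (hdep : ∀ j, DependsOn (P j) (supp j)) {S : Finset J} {j : J}
    (hS : ∀ j' ∈ S, Disjoint (supp j) (supp j')) :
    #{ω ∈ avoiding L P S | P j ω} * #(piFinset L) =
      #{ω ∈ piFinset L | P j ω} * #(avoiding L P S) := by
  have hB : DependsOn (fun ω ↦ ∀ j' ∈ S, ¬ P j' ω) (↑(supp j))ᶜ := fun x y hxy ↦
    propext <| forall₂_congr fun j' hj' ↦ by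
      rw [hdep j' fun i hi ↦ hxy i (disjoint_right.1 (hS j' hj') hi)]
  rw [avoiding, filter_filter, ← card_filter_and_mul_card_piFinset L (supp j) (hdep j) hB]
  congr 2
  exact filter_congr fun _ _ ↦ and_comm

variable [Fintype J] [DecidableEq J] {supp : J → Finset ι} {p D : ℝ}

theorem card_filter_avoiding_le (hL : ∀ i, (L i).Nonempty)
    (hdep : ∀ j, DependsOn (P j) (supp j)) (hp0 : 0 ≤ p)
    (hp : ∀ j, (#{ω ∈ piFinset L | P j ω} : ℝ) ≤ p * #(piFinset L))
    (hnb : ∀ j, (#{j' | ¬ Disjoint (supp j) (supp j')} : ℝ) ≤ D) (hpD : 4 * p * D ≤ 1)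
    (S : Finset J) (j : J) :
    (#{ω ∈ avoiding L P S | P j ω} : ℝ) ≤ 2 * p * #(avoiding L P S) := by
  -- `P j` is independent of avoiding the events `S₂` that share no coordinate with it, and by
  -- induction avoiding the remaining `≤ D` events of `S` keeps at least half of those outcomes
  induction S using Finset.strongInduction generalizing j with
  | H S ih =>
  set S₂ := {j' ∈ S | Disjoint (supp j) (supp j')}
  have hΩ : (0 : ℝ) < #(piFinset L) := by exact_mod_cast card_pos.2 (piFinset_nonempty.2 hL)
  have hindep : (#{ω ∈ avoiding L P S₂ | P j ω} : ℝ) ≤ p * #(avoiding L P S₂) := by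
    have h := card_filter_avoiding_mul_card (L := L) supp hdep (S := S₂) (j := j)
      fun j' hj' ↦ (mem_filter.1 hj').2
    have h' : (#{ω ∈ avoiding L P S₂ | P j ω} : ℝ) * #(piFinset L) =
        #{ω ∈ piFinset L | P j ω} * #(avoiding L P S₂) := by exact_mod_cast h
    nlinarith [hp j, (#(avoiding L P S₂)).cast_nonneg (α := ℝ)]
  have hhalf : (#(avoiding L P S₂) : ℝ) ≤ 2 * #(avoiding L P S) := by
    have hsum : ∑ j' ∈ S \ S₂, (#{ω ∈ avoiding L P S₂ | P j' ω} : ℝ) ≤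
        #(S \ S₂) * (2 * p * #(avoiding L P S₂)) := by
      rw [← nsmul_eq_mul]
      refine sum_le_card_nsmul _ _ _ fun j' hj' ↦ ih S₂ ?_ j'
      exact (ssubset_iff_of_subset (filter_subset _ S)).2 ⟨j', mem_sdiff.1 hj'⟩
    have hnbS : (#(S \ S₂) : ℝ) ≤ D := by
      refine le_trans ?_ (hnb j)
      refine Nat.cast_le.2 (card_le_card fun j' hj' ↦ ?_)
      simp only [S₂, mem_sdiff, mem_filter, not_and] at hj'
      simpa using hj'.2 hj'.1
    have hcover : (#(avoiding L P S₂) : ℝ) ≤ #(avoiding L P S) +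
        ∑ j' ∈ S \ S₂, (#{ω ∈ avoiding L P S₂ | P j' ω} : ℝ) := by
      exact_mod_cast card_avoiding_le_add_sum S S₂
    nlinarith [(#(avoiding L P S₂)).cast_nonneg (α := ℝ)]
  calc (#{ω ∈ avoiding L P S | P j ω} : ℝ)
      ≤ #{ω ∈ avoiding L P S₂ | P j ω} := by
        exact_mod_cast card_le_card (filter_subset_filter _ (avoiding_anti (filter_subset _ S)))
    _ ≤ p * #(avoiding L P S₂) := hindep
    _ ≤ 2 * p * #(avoiding L P S) := by nlinarith

theorem card_avoiding_pos (hL : ∀ i, (L i).Nonempty)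
    (hdep : ∀ j, DependsOn (P j) (supp j)) (hp0 : 0 ≤ p)
    (hp : ∀ j, (#{ω ∈ piFinset L | P j ω} : ℝ) ≤ p * #(piFinset L))
    (hnb : ∀ j, (#{j' | ¬ Disjoint (supp j) (supp j')} : ℝ) ≤ D) (hD : 1 ≤ D)
    (hpD : 4 * p * D ≤ 1) (S : Finset J) : 0 < #(avoiding L P S) := by
  induction S using Finset.induction_on with
  | empty => simpa [avoiding] using piFinset_nonempty.2 hL
  | insert j S _ ih =>
    have hsplit := card_filter_add_card_filter_not (s := avoiding L P S) (P j)
    have hbad := card_filter_avoiding_le hL hdep hp0 hp hnb hpD S j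
    rw [avoiding_insert]
    have : (0 : ℝ) < #{ω ∈ avoiding L P S | ¬ P j ω} := by
      have hsplit' : (#{ω ∈ avoiding L P S | P j ω} : ℝ) + #{ω ∈ avoiding L P S | ¬ P j ω} =
          #(avoiding L P S) := by exact_mod_cast hsplit
      have ih' : (0 : ℝ) < #(avoiding L P S) := by exact_mod_cast ih
      nlinarith
    exact_mod_cast this

theorem lovasz_local_lemma (hL : ∀ i, (L i).Nonempty)
    (hdep : ∀ j, DependsOn (P j) (supp j)) (hp0 : 0 ≤ p)
    (hp : ∀ j, (#{ω ∈ piFinset L | P j ω} : ℝ) ≤ p * #(piFinset L))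
    (hnb : ∀ j, (#{j' | ¬ Disjoint (supp j) (supp j')} : ℝ) ≤ D) (hD : 1 ≤ D)
    (hpD : 4 * p * D ≤ 1) : ∃ ω ∈ piFinset L, ∀ j, ¬ P j ω := by
  obtain ⟨ω, hω⟩ := card_pos.1 (card_avoiding_pos hL hdep hp0 hp hnb hD hpD univ)
  simp only [avoiding, mem_filter, mem_univ, forall_const] at hω
  exact ⟨ω, hω⟩

end LocalLemma

section FewColors

variable {ι α : Type*} [Fintype ι] [DecidableEq ι] [DecidableEq α] {L : ι → Finset α} {t : ℕ}

theorem card_filter_forall_eq_comp_mul_pow_le (D : Finset ι) (hL : ∀ i ∈ D, t ≤ #(L i))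
    {σ : ι → ι} (hσ : ∀ i ∈ D, σ i ∉ D) :
    #{ω ∈ piFinset L | ∀ i ∈ D, ω i = ω (σ i)} * t ^ #D ≤ #(piFinset L) := by
  set C := {ω ∈ piFinset L | ∀ i ∈ D, ω i = ω (σ i)}
  -- an outcome in `C` is determined by its values off `D`, so the values on `D` are free
  let glue (x : (ι → α) × (∀ i ∈ D, α)) (i : ι) : α := if h : i ∈ D then x.2 i h else x.1 i
  have hinj : Set.InjOn glue ↑(C ×ˢ D.pi L) := by
    rintro ⟨ω, v⟩ hx ⟨ω', v'⟩ hx' h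
    simp only [coe_product, Set.mem_prod, mem_coe, C, mem_filter] at hx hx'
    have hoff : ∀ i ∉ D, ω i = ω' i := fun i hi ↦ by simpa [glue, hi] using congrFun h i
    have hω : ω = ω' := funext fun i ↦ by
      by_cases hi : i ∈ D
      · rw [hx.1.2 i hi, hx'.1.2 i hi, hoff _ (hσ i hi)]
      · exact hoff i hi
    have hv : v = v' := funext₂ fun i hi ↦ by simpa [glue, hi] using congrFun h i
    rw [hω, hv]
  have hmaps : Set.MapsTo glue ↑(C ×ˢ D.pi L) ↑(piFinset L) := by
    rintro ⟨ω, v⟩ hx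
    simp only [coe_product, Set.mem_prod, mem_coe, C, mem_filter, mem_pi, mem_piFinset] at hx ⊢
    intro i
    by_cases hi : i ∈ D
    · simpa [glue, hi] using hx.2 i hi
    · simpa [glue, hi] using hx.1.1 i
  calc #C * t ^ #D ≤ #C * #(D.pi L) := by
        rw [Finset.card_pi]
        exact Nat.mul_le_mul_left _ (pow_card_le_prod D _ t hL)
    _ = #(C ×ˢ D.pi L) := (card_product _ _).symm
    _ ≤ #(piFinset L) := card_le_card_of_injOn glue hmaps hinj

def retractionsOnto (s R : Finset ι) : Finset (ι → ι) :=
  piFinset fun i ↦ if i ∈ s \ R then R else {i}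

theorem card_retractionsOnto {s R : Finset ι} (h : R ⊆ s) :
    #(retractionsOnto s R) = #R ^ (#s - #R) := by
  rw [retractionsOnto, card_piFinset, ← card_sdiff_of_subset h, ← prod_const]
  simp only [apply_ite card, card_singleton]
  rw [Fintype.prod_ite_mem]

theorem filter_card_image_le_subset_biUnion (s : Finset ι) {r : ℕ} (hr : r ≤ #s) :
    {ω ∈ piFinset L | #(s.image ω) ≤ r} ⊆ (s.powersetCard r).biUnion fun R ↦
      (retractionsOnto s R).biUnion fun σ ↦ {ω ∈ piFinset L | ∀ i ∈ s \ R, ω i = ω (σ i)} := by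
  intro ω hω
  rw [mem_filter] at hω
  obtain ⟨u, hus, hinj, himage⟩ :=
    exists_subset_injOn_image_eq_of_surjOn (f := ω) (↑s) (s.image ω) (by simp [Set.SurjOn])
  have hu : #u ≤ r := by rw [← card_image_of_injOn hinj, himage]; exact hω.2
  obtain ⟨R, huR, hRs, hR⟩ := exists_subsuperset_card_eq (by exact_mod_cast hus) hu hr
  have hrep : ∀ i ∈ s \ R, ∃ a ∈ R, ω a = ω i := fun i hi ↦ by
    obtain ⟨a, ha, hai⟩ := mem_image.1 (himage ▸ mem_image_of_mem ω (mem_sdiff.1 hi).1)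
    exact ⟨a, huR ha, hai⟩
  choose! σ hσR hσω using hrep
  refine mem_biUnion.2 ⟨R, mem_powersetCard.2 ⟨hRs, hR⟩, mem_biUnion.2
    ⟨fun i ↦ if i ∈ s \ R then σ i else i, ?_, mem_filter.2 ⟨hω.1, fun i hi ↦ ?_⟩⟩⟩
  · rw [retractionsOnto, mem_piFinset]
    intro i
    by_cases hi : i ∈ s \ R <;> simp [hi, hσR]
  · simp [hi, hσω i hi]

theorem card_filter_card_image_le_mul_pow_le (s : Finset ι) (hL : ∀ i ∈ s, t ≤ #(L i))
    {r : ℕ} (hr : r ≤ #s) :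
    #{ω ∈ piFinset L | #(s.image ω) ≤ r} * t ^ (#s - r) ≤
      2 ^ #s * r ^ (#s - r) * #(piFinset L) := by
  have hclass : ∀ R ∈ s.powersetCard r, ∀ σ ∈ retractionsOnto s R,
      #{ω ∈ piFinset L | ∀ i ∈ s \ R, ω i = ω (σ i)} * t ^ (#s - r) ≤ #(piFinset L) := by
    intro R hR σ hσ
    rw [mem_powersetCard] at hR
    rw [← hR.2, ← card_sdiff_of_subset hR.1]
    refine card_filter_forall_eq_comp_mul_pow_le _ (fun i hi ↦ hL i (mem_sdiff.1 hi).1)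
      fun i hi ↦ ?_
    have := mem_piFinset.1 hσ i
    rw [if_pos hi] at this
    exact fun h ↦ (mem_sdiff.1 h).2 this
  calc #{ω ∈ piFinset L | #(s.image ω) ≤ r} * t ^ (#s - r)
      ≤ (∑ R ∈ s.powersetCard r, ∑ σ ∈ retractionsOnto s R,
          #{ω ∈ piFinset L | ∀ i ∈ s \ R, ω i = ω (σ i)}) * t ^ (#s - r) := by
        gcongr
        exact (card_le_card (filter_card_image_le_subset_biUnion s hr)).trans
          (card_biUnion_le.trans (sum_le_sum fun R _ ↦ card_biUnion_le))
    _ ≤ ∑ R ∈ s.powersetCard r, ∑ σ ∈ retractionsOnto s R, #(piFinset L) := by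
        simp only [sum_mul]
        exact sum_le_sum fun R hR ↦ sum_le_sum fun σ hσ ↦ hclass R hR σ hσ
    _ = #(s.powersetCard r) * (r ^ (#s - r) * #(piFinset L)) := by
        rw [Finset.sum_congr rfl fun R hR ↦ by
          rw [sum_const, card_retractionsOnto (mem_powersetCard.1 hR).1,
            (mem_powersetCard.1 hR).2, smul_eq_mul], sum_const, smul_eq_mul]
    _ ≤ 2 ^ #s * r ^ (#s - r) * #(piFinset L) := by
        rw [card_powersetCard, mul_assoc]
        exact Nat.mul_le_mul_right _ (Nat.choose_le_two_pow _ _)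

end FewColors

section ListColoring

variable {V W : Type*} [DecidableEq W]

def mapEdges (Fe : Finset (Finset V)) (ι : V ↪ W) : Finset (Finset W) := Fe.image fun e ↦ e.map ι

theorem card_mapEdges (Fe : Finset (Finset V)) (ι : V ↪ W) : #(mapEdges Fe ι) = #Fe :=
  card_image_of_injective _ (map_injective ι)

variable [Fintype V] [Fintype W] [DecidableEq V]

theorem card_embedding_mapsTo_le (s : Finset V) (U : Finset W) :
    #{g : V ↪ W | ∀ v ∈ s, g v ∈ U} ≤ #U ^ #s * card W ^ (card V - #s) := by
  calc #{g : V ↪ W | ∀ v ∈ s, g v ∈ U}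
      ≤ #(piFinset fun v ↦ if v ∈ s then U else univ) := by
        refine card_le_card_of_injOn (fun g ↦ ⇑g) (fun g hg ↦ ?_)
          (fun _ _ _ _ h ↦ DFunLike.coe_injective h)
        simp only [coe_filter, Set.mem_ofPred_eq, mem_univ, true_and] at hg
        simp only [mem_coe, mem_piFinset]
        intro v
        by_cases hv : v ∈ s <;> simp [hv, hg]
    _ = #U ^ #s * card W ^ (card V - #s) := by
        simp only [card_piFinset, apply_ite card, prod_ite, card_univ, prod_const,
          filter_mem_eq_inter, univ_inter, filter_not, card_univ_sdiff]

theorem card_not_disjoint_mapEdges_le {k : ℕ} {Fe : Finset (Finset V)} (hFk : ∀ e ∈ Fe, #e = k)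
    (ι : V ↪ W) :
    #{ι' | ¬ Disjoint (mapEdges Fe ι) (mapEdges Fe ι')} ≤
      #Fe * (card V ^ k * card W ^ (card V - k)) := by
  calc #{ι' | ¬ Disjoint (mapEdges Fe ι) (mapEdges Fe ι')}
      ≤ #(Fe.biUnion fun e' ↦ {ι' : V ↪ W | ∀ v ∈ e', ι' v ∈ univ.map ι}) := by
        refine card_le_card fun ι' hι' ↦ ?_
        obtain ⟨x, hx, hx'⟩ := not_disjoint_iff.1 (mem_filter.1 hι').2
        obtain ⟨e, -, rfl⟩ := mem_image.1 hx
        obtain ⟨e', he', hee'⟩ := mem_image.1 hx'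
        refine mem_biUnion.2 ⟨e', he', mem_filter.2 ⟨mem_univ _, fun v hv ↦ ?_⟩⟩
        obtain ⟨u, -, hu⟩ := mem_map.1 (hee' ▸ mem_map_of_mem ι' hv)
        exact hu ▸ mem_map_of_mem ι (mem_univ u)
    _ ≤ #Fe * (card V ^ k * card W ^ (card V - k)) := by
        refine card_biUnion_le_card_mul _ _ _ fun e' he' ↦ ?_
        simpa [hFk e' he'] using card_embedding_mapsTo_le e' (univ.map ι)

end ListColoring

theorem listRamseyF_le {f n k q t : ℕ} {Fe : Finset (Finset (Fin f))}
    {G : Finset (Finset (Fin n))} (hFk : ∀ e ∈ Fe, #e = k) (hqE : q ≤ #Fe) (ht : 1 ≤ t)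
    (h : 4 * (2 ^ #Fe * (q - 1) ^ (#Fe - (q - 1))) * (#Fe * (f ^ k * n ^ (f - k)) + 1) ≤
      t ^ (#Fe - (q - 1))) :
    listRamseyF Fe q n G ≤ t := by
  classical
  set s := #Fe - (q - 1)
  set c := 2 ^ #Fe * (q - 1) ^ s
  refine Nat.sInf_le fun L hL ↦ ?_
  -- every vertex set is a coordinate; the colours of non-edges of `G` never matter
  let L' (e : Finset (Fin n)) : Finset ℕ := if e ∈ G then L e else {0}
  let P (ι : Fin f ↪ Fin n) (φ : Finset (Fin n) → ℕ) : Prop :=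
    IsCopy Fe G ι ∧ #((mapEdges Fe ι).image φ) ≤ q - 1
  have htpos : (0 : ℝ) < (t : ℝ) ^ s := by positivity
  have hp (ι : Fin f ↪ Fin n) :
      (#{φ ∈ piFinset L' | P ι φ} : ℝ) ≤ c / t ^ s * #(piFinset L') := by
    by_cases hι : IsCopy Fe G ι
    · have hlists : ∀ e ∈ mapEdges Fe ι, t ≤ #(L' e) := fun e he ↦ by
        obtain ⟨e', he', rfl⟩ := mem_image.1 he
        simpa [L', hι e' he'] using hL _ (hι e' he')
      have hbad := card_filter_card_image_le_mul_pow_le _ hlists (r := q - 1)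
        (by rw [card_mapEdges]; omega)
      rw [card_mapEdges] at hbad
      rw [div_mul_eq_mul_div, le_div_iff₀ htpos]
      calc (#{φ ∈ piFinset L' | P ι φ} : ℝ) * t ^ s
          ≤ #{φ ∈ piFinset L' | #((mapEdges Fe ι).image φ) ≤ q - 1} * t ^ s := by
            gcongr
            exact fun h ↦ h.2
        _ ≤ c * #(piFinset L') := by exact_mod_cast hbad
    · simp [P, hι]
      positivity
  have hnb (ι : Fin f ↪ Fin n) : (#{ι' | ¬ Disjoint (mapEdges Fe ι) (mapEdges Fe ι')} : ℝ) ≤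
      (#Fe * (f ^ k * n ^ (f - k)) + 1 : ℕ) := by
    have := card_not_disjoint_mapEdges_le hFk ι
    simp only [Fintype.card_fin] at this
    exact_mod_cast this.trans (Nat.le_succ _)
  have hpD : 4 * (c / t ^ s) * ((#Fe * (f ^ k * n ^ (f - k)) + 1 : ℕ) : ℝ) ≤ 1 := by
    rw [mul_comm 4, div_mul_eq_mul_div, div_mul_eq_mul_div, div_le_one htpos]
    exact_mod_cast (by linarith [h] : c * 4 * (#Fe * (f ^ k * n ^ (f - k)) + 1) ≤ t ^ s)
  have hL' (e : Finset (Fin n)) : (L' e).Nonempty := by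
    by_cases he : e ∈ G
    · simpa [L', he] using card_pos.1 (ht.trans (hL e he))
    · simp [L', he]
  have hdep (ι : Fin f ↪ Fin n) : DependsOn (P ι) (mapEdges Fe ι) := fun x y hxy ↦ by
    simp only [P, image_congr fun e he ↦ hxy e he]
  obtain ⟨φ, hφ, hgood⟩ := lovasz_local_lemma hL' hdep (by positivity) hp hnb
    (by exact_mod_cast Nat.le_add_left 1 _) hpD
  refine ⟨φ, fun e he ↦ by simpa [L', he] using mem_piFinset.1 hφ e, fun ι hι ↦ ?_⟩
  have := hgood ι
  simp only [P, hι, true_and, not_le] at this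
  exact Nat.le_of_pred_lt this

theorem listRamseyF_le_mul {f n k q m : ℕ} {Fe : Finset (Finset (Fin f))}
    {G : Finset (Finset (Fin n))} (hFk : ∀ e ∈ Fe, #e = k) (hFe : 0 < #Fe) (hqE : q ≤ #Fe)
    (hf : 0 < f) (hm : 1 ≤ m) (hnm : n ^ (f - k) ≤ m ^ (#Fe - (q - 1))) :
    listRamseyF Fe q n G ≤ 8 * 2 ^ #Fe * #Fe ^ (#Fe - (q - 1)) * #Fe * f ^ k * m := by
  set E := #Fe
  set s := E - (q - 1)
  set K := 8 * 2 ^ E * E ^ s * E * f ^ k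
  have hK : 1 ≤ K := Nat.one_le_iff_ne_zero.2 (by positivity)
  have hs : 1 ≤ s := by omega
  have hms : 1 ≤ E * f ^ k * m ^ s := Nat.one_le_iff_ne_zero.2 (by positivity)
  refine listRamseyF_le hFk hqE (Nat.mul_le_mul hK hm) ?_
  calc 4 * (2 ^ E * (q - 1) ^ s) * (E * (f ^ k * n ^ (f - k)) + 1)
      ≤ 4 * (2 ^ E * E ^ s) * (E * f ^ k * m ^ s + E * f ^ k * m ^ s) := by
        rw [← mul_assoc E]
        gcongr
        omega
    _ = K * m ^ s := by ring
    _ ≤ K ^ s * m ^ s := Nat.mul_le_mul_right _ (Nat.le_self_pow (by omega) K)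
    _ = (K * m) ^ s := (mul_pow K m s).symm

theorem listRamseyF_fin_zero {f k q : ℕ} {Fe : Finset (Finset (Fin f))} (hFe : Fe.Nonempty)
    (hk : k ≠ 0) {G : Finset (Finset (Fin 0))} (hG : ∀ e ∈ G, #e = k) :
    listRamseyF Fe q 0 G = 0 := by
  have hG : G = ∅ := eq_empty_of_forall_notMem fun e he ↦
    hk ((hG e he).symm.trans (card_eq_zero.2 (Subsingleton.elim e ∅)))
  subst hG
  exact Nat.eq_zero_of_le_zero <| Nat.sInf_le fun _ _ ↦
    ⟨fun _ ↦ 0, by simp, fun _ hι ↦ absurd (hι _ hFe.choose_spec) (notMem_empty _)⟩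

theorem exists_nat_pow_le_pow_and_le_two_mul_rpow {n a b : ℕ} (hn : 1 ≤ n) (hb : b ≠ 0) :
    ∃ m : ℕ, 1 ≤ m ∧ n ^ a ≤ m ^ b ∧ (m : ℝ) ≤ 2 * (n : ℝ) ^ ((a : ℝ) / b) := by
  set x := (n : ℝ) ^ ((a : ℝ) / b)
  have hx : 1 ≤ x := Real.one_le_rpow (by exact_mod_cast hn) (by positivity)
  have hxm : x ≤ ⌈x⌉₊ := Nat.le_ceil x
  refine ⟨⌈x⌉₊, by exact_mod_cast hx.trans hxm, ?_, ?_⟩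
  · have hpow : x ^ b = (n : ℝ) ^ a := by
      rw [← Real.rpow_natCast, ← Real.rpow_mul (by positivity), div_mul_cancel₀ _ (by
        exact_mod_cast hb), Real.rpow_natCast]
    exact_mod_cast hpow ▸ pow_le_pow_left₀ (by positivity) hxm b
  · linarith [Nat.ceil_lt_add_one (zero_le_one.trans hx)]

/-- Theorem 1.5: for fixed `k`-uniform `F` with `|V(F)| > k` and
`1 ≤ q ≤ |E(F)|`, there is `C` such that for every `k`-uniform `G` on `n` vertices,
`r_ℓ(G, F, q) ≤ C · n^{(|V(F)|-k)/(|E(F)|-q+1)}`. -/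
theorem stmt9 (k f q : ℕ) (hk : 2 ≤ k) (Fe : Finset (Finset (Fin f)))
    (hFk : ∀ e ∈ Fe, e.card = k) (hf : k < f) (hq : 1 ≤ q) (hqE : q ≤ Fe.card) :
    ∃ C : ℝ, 0 < C ∧ ∀ n : ℕ, ∀ G : Finset (Finset (Fin n)), (∀ e ∈ G, e.card = k) →
      (listRamseyF Fe q n G : ℝ) ≤
        C * (n : ℝ) ^ (((f : ℝ) - k) / ((Fe.card : ℝ) - q + 1)) := by
  set E := #Fe
  set s := E - (q - 1)
  set K := 8 * 2 ^ E * E ^ s * E * f ^ k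
  have hE : 0 < E := by omega
  have hf0 : 0 < f := by omega
  have hexp : ((f : ℝ) - k) / ((E : ℝ) - q + 1) = ((f - k : ℕ) : ℝ) / (s : ℕ) := by
    rw [Nat.cast_sub hf.le, Nat.cast_sub (by omega : q - 1 ≤ E), Nat.cast_sub hq]
    push_cast
    ring_nf
  refine ⟨2 * K, by positivity, fun n G hG ↦ ?_⟩
  rcases Nat.eq_zero_or_pos n with rfl | hn
  · rw [listRamseyF_fin_zero (card_pos.1 hE) (by omega) hG, Nat.cast_zero]
    positivity
  · obtain ⟨m, hm, hnm, hm2⟩ :=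
      exists_nat_pow_le_pow_and_le_two_mul_rpow (a := f - k) (b := s) hn (by omega)
    have := listRamseyF_le_mul (G := G) hFk hE hqE (by omega) hm hnm
    rw [hexp]
    calc (listRamseyF Fe q n G : ℝ) ≤ K * m := by exact_mod_cast this
      _ ≤ K * (2 * (n : ℝ) ^ (((f - k : ℕ) : ℝ) / (s : ℕ))) := by gcongr
      _ = _ := by ring
end
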